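/- Let v be a unit vector and let x be a circular sector with opening angle α(x) ≤ π/4 and direction u(x) satisfying |π − γ(u(x), v)| ≤ α(x) (where γ is the counter-clockwise angle). If q is any point contained in x, then the projection of q onto the directed line through p(x) in direction v is not greater (along v) than the projection of p(x) plus r(x)·sin(α(x)); in particular, no point of x projects strictly more than distance r(x) ahead of p(x) along v, since every point z of x satisfies ⟨z − p(x), v⟩ ≤ r(x)·cos(π − γ(u(x), v) − α(x)/2) ≤ 0 when π − γ(u(x), v) − α(x)/2 ≥ π/2. -/

import Mathlib

open Real Set

noncomputable section

abbrev E2 := EuclideanSpace ℝ (Fin 2)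

/-- Euclidean inner product on the plane. -/
def iprod (x y : E2) : ℝ := inner ℝ x y

structure Sector where
  p : E2
  u : E2
  r : ℝ
  α : ℝ
  hu : ‖u‖ = 1
  hr : 0 < r
  hα : 0 < α

def Sector.mem (c : Sector) (q : E2) : Prop :=
  dist q c.p ≤ c.r ∧ InnerProductGeometry.angle (q - c.p) c.u ≤ c.α / 2

instance : Fact (Module.finrank ℝ E2 = 2) := ⟨finrank_euclideanSpace_fin⟩

def stdOrient : Orientation ℝ E2 (Fin 2) :=
  (EuclideanSpace.basisFun (Fin 2) ℝ).toBasis.orientation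

/-- Counter-clockwise angle from `u` to `v`, in `[0, 2π)`. -/
def ccw (u v : E2) : ℝ :=
  if (stdOrient.oangle u v).toReal < 0 then (stdOrient.oangle u v).toReal + 2 * π
  else (stdOrient.oangle u v).toReal

def lineThrough (p d : E2) : Set E2 := {q | ∃ t : ℝ, q = p + t • d}

def segFrom (b d : E2) (r : ℝ) : Set E2 := {q | ∃ t : ℝ, 0 ≤ t ∧ t ≤ r ∧ q = b + t • d}

def lineSide (p d q : E2) : ℝ := (q 0 - p 0) * d 1 - (q 1 - p 1) * d 0

def acuteAngle (u v : E2) : ℝ :=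
  min (InnerProductGeometry.angle u v) (π - InnerProductGeometry.angle u v)

/-! The apex direction `u` nearly opposes `v`: the unoriented angle `∠(u, v)` equals
`π − |π − γ(u, v)| ≥ π − α`. By the triangle inequality for angles, every point `q` of the sector
then has `∠(q − p, v) ≥ π − 3α/2 ≥ π/2`, so `⟨q − p, v⟩ ≤ 0`, which gives both bounds. -/

section

open InnerProductGeometry

variable {V : Type*} [NormedAddCommGroup V] [InnerProductSpace ℝ V]

theorem real_inner_nonpos_of_pi_div_two_le_angle {x y : V} (h : π / 2 ≤ angle x y) :
    inner ℝ x y ≤ 0 := by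
  rw [← cos_angle_mul_norm_mul_norm]
  refine mul_nonpos_of_nonpos_of_nonneg ?_ (by positivity)
  exact cos_nonpos_of_pi_div_two_le_of_le h (by linarith [angle_le_pi x y, pi_pos])

theorem real_inner_nonpos_of_angle_add_pi_div_two_le {z u v : V}
    (h : angle z u + π / 2 ≤ angle u v) : inner ℝ z v ≤ 0 :=
  real_inner_nonpos_of_pi_div_two_le_angle <| by
    linarith [angle_le_angle_add_angle u z v, angle_comm z u]

theorem abs_pi_sub_ccw {u v : E2} (hu : u ≠ 0) (hv : v ≠ 0) :
    |π - ccw u v| = π - angle u v := by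
  rw [stdOrient.angle_eq_abs_oangle_toReal hu hv]
  have hθ := abs_le.1 (Real.Angle.abs_toReal_le_pi (stdOrient.oangle u v))
  unfold ccw
  split_ifs with h
  · rw [abs_of_neg h, abs_of_nonpos (by linarith)]
    ring
  · rw [abs_of_nonneg (not_lt.1 h), abs_of_nonneg (by linarith)]

theorem Sector.iprod_sub_p_nonpos (x : Sector) {v : E2} (hv : v ≠ 0) (hα : x.α ≤ π / 3)
    (hdir : |π - ccw x.u v| ≤ x.α) {q : E2} (hq : x.mem q) : iprod (q - x.p) v ≤ 0 := by
  have hu : x.u ≠ 0 := norm_ne_zero_iff.1 (x.hu ▸ one_ne_zero)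
  rw [abs_pi_sub_ccw hu hv] at hdir
  exact real_inner_nonpos_of_angle_add_pi_div_two_le (u := x.u) (by linarith [hq.2])

end

/-- If the direction of a sector `x` (opening angle ≤ π/4) nearly opposes a unit
vector `v`, i.e. |π − γ(u(x), v)| ≤ α(x), then every point of `x` projects at most
r(x)·sin α(x) ahead of the apex along `v`; and if π − γ(u(x), v) − α(x)/2 ≥ π/2 then
every point of `x` projects non-positively along `v`. -/
theorem sector_projection_bound (x : Sector) (v : E2) (hv : ‖v‖ = 1)
    (hα : x.α ≤ π / 4)
    (hdir : |π - ccw x.u v| ≤ x.α) :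
    (∀ q, x.mem q → iprod (q - x.p) v ≤ x.r * Real.sin x.α) ∧
    (π / 2 ≤ π - ccw x.u v - x.α / 2 →
      ∀ q, x.mem q → iprod (q - x.p) v ≤ 0) := by
  have hv0 : v ≠ 0 := norm_ne_zero_iff.1 (hv ▸ one_ne_zero)
  have proj_nonpos : ∀ q, x.mem q → iprod (q - x.p) v ≤ 0 := fun q hq =>
    x.iprod_sub_p_nonpos hv0 (by linarith [pi_pos]) hdir hq
  have hsin : 0 ≤ Real.sin x.α :=
    sin_nonneg_of_nonneg_of_le_pi x.hα.le (by linarith [pi_pos])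
  exact ⟨fun q hq => (proj_nonpos q hq).trans (mul_nonneg x.hr.le hsin), fun _ => proj_nonpos⟩
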